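/- arXiv:2008.03762 — 2 statements merged into one kernel-verified Lean document; each statement's English description precedes it below -/
import Mathlib

section
/- Consider a single-server discrete-time queue $q(k+1) = \max\{0, q(k) + a(k) - s(k)\}$ where $\{(a(k), s(k))\}$ are i.i.d. pairs with $a(k), s(k) \in [0, A]$ almost surely, $\mathbb{E}[a(k)] = \lambda - \epsilon$, $\mathbb{E}[s(k)] = \lambda + \epsilon$ for some $\lambda > 0$, $0 < \epsilon < \lambda$, and $\mathrm{Cov}(a(k), s(k)) = 0$. Suppose the chain has a stationary distribution $\bar q$ with finite second moment. Writing $u(k) = s(k) - \min\{q(k) + a(k), s(k)\}$ for the unused service, the stationary mean satisfies $\mathbb{E}[\bar q] = \frac{\mathrm{Var}(a) + \mathrm{Var}(s) + 4\epsilon^2 - \mathbb{E}[\bar u^2]}{4\epsilon}$, where $\mathbb{E}[\bar u] = 2\epsilon$ and $\mathbb{E}[\bar u^2] \le 2A\epsilon$. In particular, if $\epsilon \le \frac{\mathrm{Var}(a)+\mathrm{Var}(s)}{4A}$ then $\mathbb{E}[\bar q] \ge \frac{\mathrm{Var}(a)+\mathrm{Var}(s)}{8\epsilon}$. -/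
open MeasureTheory ProbabilityTheory

/-!
Write `d = a - s`, so the next queue length is `(q + d)⁺ = (q + d) + u`, where the unused service
`u = (q + d)⁻` satisfies `u · (q + d)⁺ = 0`, hence `((q + d)⁺)² = (q + d)² - u²`. Stationarity
equates the first and second moments of `(q + d)⁺` with those of `q`. The first moments give
`E u = -E d = 2ε`; the second, with `E[q d] = E q · E d` by independence, give
`4ε E q = E d² - E u²`. Finally `0 ≤ u ≤ s ≤ A` gives `E u² ≤ A E u = 2Aε`.
-/

lemma max_zero_eq_add_max_zero_neg (x : ℝ) : max 0 x = x + max 0 (-x) := by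
  rcases le_total 0 x with h | h
  · rw [max_eq_right h, max_eq_left (neg_nonpos.2 h), add_zero]
  · rw [max_eq_left h, max_eq_right (neg_nonneg.2 h), add_neg_cancel]

lemma max_zero_sq_eq_sq_sub (x : ℝ) : max 0 x ^ 2 = x ^ 2 - max 0 (-x) ^ 2 := by
  rcases le_total 0 x with h | h
  · rw [max_eq_right h, max_eq_left (neg_nonpos.2 h)]; ring
  · rw [max_eq_left h, max_eq_right (neg_nonneg.2 h)]; ring

lemma sub_min_eq_max_zero_neg (q a s : ℝ) : s - min (q + a) s = max 0 (-(q + (a - s))) := by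
  rw [← max_sub_sub_left, sub_self, max_comm]
  ring_nf

section Integral

variable {α : Type*} [MeasurableSpace α] {μ : Measure α} {f g : α → ℝ}

lemma integral_add_sq (hf : MemLp f 2 μ) (hg : MemLp g 2 μ) :
    ∫ x, (f x + g x) ^ 2 ∂μ = ∫ x, f x ^ 2 ∂μ + 2 * ∫ x, f x * g x ∂μ + ∫ x, g x ^ 2 ∂μ := by
  have hfg : Integrable (fun x => f x * g x) μ := hf.integrable_mul hg
  have hsum : Integrable (fun x => f x ^ 2 + 2 * (f x * g x)) μ :=
    hf.integrable_sq.add (hfg.const_mul 2)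
  simp_rw [add_sq, mul_assoc]
  rw [integral_add hsum hg.integrable_sq, integral_add hf.integrable_sq (hfg.const_mul 2),
    integral_const_mul]

lemma integral_sub_sq (hf : MemLp f 2 μ) (hg : MemLp g 2 μ) :
    ∫ x, (f x - g x) ^ 2 ∂μ = ∫ x, f x ^ 2 ∂μ - 2 * ∫ x, f x * g x ∂μ + ∫ x, g x ^ 2 ∂μ := by
  simpa only [Pi.neg_apply, ← sub_eq_add_neg, mul_neg, neg_sq, integral_neg] using
    integral_add_sq hf hg.neg

lemma memLp_of_ae_mem_Icc [IsFiniteMeasure μ] {p : ENNReal} {C : ℝ}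
    (hf : AEStronglyMeasurable f μ) (hbound : ∀ᵐ x ∂μ, f x ∈ Set.Icc 0 C) : MemLp f p μ :=
  MemLp.of_bound hf C <| by
    filter_upwards [hbound] with x hx
    rw [Real.norm_of_nonneg hx.1]
    exact hx.2

lemma integral_sq_le_mul_integral {C : ℝ} (hf : Integrable f μ)
    (hbound : ∀ᵐ x ∂μ, f x ∈ Set.Icc 0 C) : ∫ x, f x ^ 2 ∂μ ≤ C * ∫ x, f x ∂μ := by
  have hpt : ∀ᵐ x ∂μ, f x ^ 2 ≤ C * f x := by
    filter_upwards [hbound] with x ⟨h0, hC⟩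
    nlinarith
  have hf2 : Integrable (fun x => f x ^ 2) μ :=
    (hf.const_mul C).mono' (hf.1.pow 2) <| by
      filter_upwards [hpt] with x hx
      rwa [Real.norm_of_nonneg (sq_nonneg _)]
  rw [← integral_const_mul]
  exact integral_mono_ae hf2 (hf.const_mul C) hpt

end Integral

namespace Lindley

variable {Ω : Type*} [MeasurableSpace Ω] {μ : Measure Ω} {q d : Ω → ℝ}

lemma identDistrib (hq : AEMeasurable q μ) (hd : AEMeasurable d μ)
    (hstat : μ.map (fun ω => max 0 (q ω + d ω)) = μ.map q) :
    IdentDistrib (fun ω => max 0 (q ω + d ω)) q μ μ :=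
  ⟨aemeasurable_const.max (hq.add hd), hq, hstat⟩

lemma memLp_unused {p : ENNReal} (hq : MemLp q p μ) (hd : MemLp d p μ) :
    MemLp (fun ω => max 0 (-(q ω + d ω))) p μ := by
  convert (hq.add hd).neg.pos_part using 2 with ω
  exact max_comm _ _

lemma integral_unused (hq : Integrable q μ) (hd : Integrable d μ)
    (hstat : μ.map (fun ω => max 0 (q ω + d ω)) = μ.map q) :
    ∫ ω, max 0 (-(q ω + d ω)) ∂μ = -∫ ω, d ω ∂μ := by
  have hu : Integrable (fun ω => max 0 (-(q ω + d ω))) μ :=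
    memLp_one_iff_integrable.1 <|
      memLp_unused (memLp_one_iff_integrable.2 hq) (memLp_one_iff_integrable.2 hd)
  have hx : Integrable (fun ω => q ω + d ω) μ := hq.add hd
  have h := (identDistrib hq.1.aemeasurable hd.1.aemeasurable hstat).integral_eq
  rw [integral_congr_ae (ae_of_all _ fun ω => max_zero_eq_add_max_zero_neg _),
    integral_add hx hu, integral_add hq hd] at h
  linarith

lemma integral_unused_sq (hq : MemLp q 2 μ) (hd : MemLp d 2 μ)
    (hind : IndepFun q d μ) (hstat : μ.map (fun ω => max 0 (q ω + d ω)) = μ.map q) :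
    ∫ ω, max 0 (-(q ω + d ω)) ^ 2 ∂μ = 2 * (∫ ω, q ω ∂μ) * ∫ ω, d ω ∂μ + ∫ ω, d ω ^ 2 ∂μ := by
  have hx : MemLp (fun ω => q ω + d ω) 2 μ := hq.add hd
  have h := ((identDistrib hq.1.aemeasurable hd.1.aemeasurable hstat).comp
    (measurable_id.pow_const 2)).integral_eq
  simp only [Function.comp_def, id] at h
  rw [integral_congr_ae (ae_of_all _ fun ω => max_zero_sq_eq_sq_sub _),
    integral_sub hx.integrable_sq (memLp_unused hq hd).integrable_sq,
    integral_add_sq hq hd, hind.integral_fun_mul_eq_mul_integral hq.1 hd.1] at h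
  linarith

end Lindley

theorem gg1_stationary_mean_general
    {Ω : Type*} [MeasurableSpace Ω] (μ : Measure Ω) [IsProbabilityMeasure μ]
    (a s q : Ω → ℝ) (A lam ε : ℝ)
    (ha_meas : Measurable a) (hs_meas : Measurable s) (hq_meas : Measurable q)
    (hA : 0 < A) (hε : 0 < ε)
    (ha_bdd : ∀ᵐ ω ∂μ, 0 ≤ a ω ∧ a ω ≤ A)
    (hs_bdd : ∀ᵐ ω ∂μ, 0 ≤ s ω ∧ s ω ≤ A)
    (hq_nonneg : ∀ᵐ ω ∂μ, 0 ≤ q ω)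
    (ha_mean : ∫ ω, a ω ∂μ = lam - ε)
    (hs_mean : ∫ ω, s ω ∂μ = lam + ε)
    (hcov : ∫ ω, a ω * s ω ∂μ = (lam - ε) * (lam + ε))
    (hindep : IndepFun q (fun ω => (a ω, s ω)) μ)
    (hstat : Measure.map (fun ω => max 0 (q ω + a ω - s ω)) μ = Measure.map q μ)
    (hq2 : Integrable (fun ω => (q ω) ^ 2) μ)
    (u : Ω → ℝ)
    (hu : ∀ ω, u ω = s ω - min (q ω + a ω) (s ω)) :
    (∫ ω, u ω ∂μ = 2 * ε) ∧
    (∫ ω, (u ω) ^ 2 ∂μ ≤ 2 * A * ε) ∧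
    (∫ ω, q ω ∂μ =
      ((∫ ω, (a ω) ^ 2 ∂μ - (lam - ε) ^ 2) + (∫ ω, (s ω) ^ 2 ∂μ - (lam + ε) ^ 2)
        + 4 * ε ^ 2 - ∫ ω, (u ω) ^ 2 ∂μ) / (4 * ε)) ∧
    (ε ≤ ((∫ ω, (a ω) ^ 2 ∂μ - (lam - ε) ^ 2)
            + (∫ ω, (s ω) ^ 2 ∂μ - (lam + ε) ^ 2)) / (4 * A) →
      ((∫ ω, (a ω) ^ 2 ∂μ - (lam - ε) ^ 2)
          + (∫ ω, (s ω) ^ 2 ∂μ - (lam + ε) ^ 2)) / (8 * ε) ≤ ∫ ω, q ω ∂μ) := by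
  set d : Ω → ℝ := fun ω => a ω - s ω with hd_def
  have ha : MemLp a 2 μ := memLp_of_ae_mem_Icc ha_meas.aestronglyMeasurable ha_bdd
  have hs : MemLp s 2 μ := memLp_of_ae_mem_Icc hs_meas.aestronglyMeasurable hs_bdd
  have hq : MemLp q 2 μ := (memLp_two_iff_integrable_sq hq_meas.aestronglyMeasurable).2 hq2
  have hd : MemLp d 2 μ := ha.sub hs
  have hstat' : μ.map (fun ω => max 0 (q ω + d ω)) = μ.map q := by
    simpa only [hd_def, add_sub_assoc] using hstat
  have hu_eq : u = fun ω => max 0 (-(q ω + d ω)) :=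
    funext fun ω => (hu ω).trans (sub_min_eq_max_zero_neg _ _ _)
  have hEd : ∫ ω, d ω ∂μ = -(2 * ε) := by
    rw [integral_sub (ha.integrable one_le_two) (hs.integrable one_le_two), ha_mean, hs_mean]
    ring
  have hEu : ∫ ω, u ω ∂μ = 2 * ε := by
    rw [hu_eq, Lindley.integral_unused (hq.integrable one_le_two) (hd.integrable one_le_two) hstat',
      hEd, neg_neg]
  have hu_mem : ∀ᵐ ω ∂μ, u ω ∈ Set.Icc 0 A := by
    filter_upwards [ha_bdd, hs_bdd, hq_nonneg] with ω haω hsω hqω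
    rw [hu_eq]
    exact ⟨le_max_left _ _, max_le hA.le (by linarith)⟩
  have hEu2 : ∫ ω, u ω ^ 2 ∂μ ≤ 2 * A * ε :=
    calc ∫ ω, u ω ^ 2 ∂μ ≤ A * ∫ ω, u ω ∂μ := integral_sq_le_mul_integral
          (hu_eq ▸ (Lindley.memLp_unused hq hd).integrable one_le_two) hu_mem
      _ = 2 * A * ε := by rw [hEu]; ring
  have hdrift : ∫ ω, u ω ^ 2 ∂μ = 2 * (∫ ω, q ω ∂μ) * ∫ ω, d ω ∂μ + ∫ ω, d ω ^ 2 ∂μ :=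
    hu_eq ▸ Lindley.integral_unused_sq hq hd
      (hindep.comp measurable_id (measurable_fst.sub measurable_snd)) hstat'
  have hmean : ∫ ω, q ω ∂μ =
      ((∫ ω, (a ω) ^ 2 ∂μ - (lam - ε) ^ 2) + (∫ ω, (s ω) ^ 2 ∂μ - (lam + ε) ^ 2)
        + 4 * ε ^ 2 - ∫ ω, (u ω) ^ 2 ∂μ) / (4 * ε) := by
    rw [eq_div_iff (by positivity), hdrift, hEd, integral_sub_sq ha hs, hcov]
    ring
  refine ⟨hEu, hEu2, hmean, fun hsmall => ?_⟩
  rw [le_div_iff₀ (by positivity)] at hsmall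
  rw [hmean, div_le_div_iff₀ (by positivity) (by positivity)]
  nlinarith

/-- Kingman-type heavy-traffic bound for a discrete-time G/G/1 queue in
stationarity: setting the stationary drifts of `q` and `q²` to zero identifies
the stationary mean queue length, which is at least `(Var a + Var s)/(8ε)`
when `ε` is small. -/
theorem gg1_stationary_mean
    {Ω : Type*} [MeasurableSpace Ω] (μ : Measure Ω) [IsProbabilityMeasure μ]
    (a s q : Ω → ℝ) (A lam ε : ℝ)
    (ha_meas : Measurable a) (hs_meas : Measurable s) (hq_meas : Measurable q)
    (hA : 0 < A) (hlam : 0 < lam) (hε : 0 < ε) (hεlam : ε < lam)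
    (ha_bdd : ∀ᵐ ω ∂μ, 0 ≤ a ω ∧ a ω ≤ A)
    (hs_bdd : ∀ᵐ ω ∂μ, 0 ≤ s ω ∧ s ω ≤ A)
    (hq_nonneg : ∀ᵐ ω ∂μ, 0 ≤ q ω)
    (ha_mean : ∫ ω, a ω ∂μ = lam - ε)
    (hs_mean : ∫ ω, s ω ∂μ = lam + ε)
    (hcov : ∫ ω, a ω * s ω ∂μ = (lam - ε) * (lam + ε))
    (hindep : IndepFun q (fun ω => (a ω, s ω)) μ)
    (hstat : Measure.map (fun ω => max 0 (q ω + a ω - s ω)) μ = Measure.map q μ)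
    (hq2 : Integrable (fun ω => (q ω) ^ 2) μ)
    (u : Ω → ℝ)
    (hu : ∀ ω, u ω = s ω - min (q ω + a ω) (s ω)) :
    (∫ ω, u ω ∂μ = 2 * ε) ∧
    (∫ ω, (u ω) ^ 2 ∂μ ≤ 2 * A * ε) ∧
    (∫ ω, q ω ∂μ =
      ((∫ ω, (a ω) ^ 2 ∂μ - (lam - ε) ^ 2) + (∫ ω, (s ω) ^ 2 ∂μ - (lam + ε) ^ 2)
        + 4 * ε ^ 2 - ∫ ω, (u ω) ^ 2 ∂μ) / (4 * ε)) ∧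
    (ε ≤ ((∫ ω, (a ω) ^ 2 ∂μ - (lam - ε) ^ 2)
            + (∫ ω, (s ω) ^ 2 ∂μ - (lam + ε) ^ 2)) / (4 * A) →
      ((∫ ω, (a ω) ^ 2 ∂μ - (lam - ε) ^ 2)
          + (∫ ω, (s ω) ^ 2 ∂μ - (lam + ε) ^ 2)) / (8 * ε) ≤ ∫ ω, q ω ∂μ) :=
  gg1_stationary_mean_general μ a s q A lam ε ha_meas hs_meas hq_meas hA hε ha_bdd hs_bdd hq_nonneg
    ha_mean hs_mean hcov hindep hstat hq2 u hu
end

section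
/- Consider two coupled discrete-time processes: an imbalance process $z(k+1) = z(k) + a_1(k) - a_2(k)$ on $\mathbb{Z}$, and a queue $q(k+1) = \max\{0, q(k) + a^\dagger(k) - s^\dagger(k)\}$ on $\mathbb{Z}_+$. Suppose $q(0) = |z(0)|$ and at every step $k$: if $z(k) \ge 0$ then $s^\dagger(k) \ge a_2(k)$ and $a^\dagger(k) \le a_1(k)$; if $z(k) < 0$ then $s^\dagger(k) \ge a_1(k)$ and $a^\dagger(k) \le a_2(k)$. Then $q(k) \le |z(k)|$ for all $k \ge 0$. -/
/-!
By induction on `k`. In either sign case the hypotheses bound the queue's increment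
`ad k - sd k` by the signed drift `±(a₁ k - a₂ k)` of `z` in the direction of the sign of `z k`,
and `|z k| + ±(a₁ k - a₂ k)` is at most `|z (k + 1)|`.
-/

theorem max_zero_add_sub_le_abs_add_sub {α : Type*} [AddCommGroup α] [LinearOrder α]
    [IsOrderedAddMonoid α] {q z a b d s : α} (hqz : q ≤ |z|)
    (hpos : 0 ≤ z → b ≤ s ∧ d ≤ a) (hneg : z < 0 → a ≤ s ∧ d ≤ b) :
    max 0 (q + d - s) ≤ |z + a - b| := by
  refine max_le (abs_nonneg _) ?_
  rcases le_or_gt 0 z with hz | hz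
  · obtain ⟨hbs, hda⟩ := hpos hz
    calc q + d - s ≤ |z| + a - b := sub_le_sub (add_le_add hqz hda) hbs
      _ = z + a - b := by rw [abs_of_nonneg hz]
      _ ≤ |z + a - b| := le_abs_self _
  · obtain ⟨has, hdb⟩ := hneg hz
    calc q + d - s ≤ |z| + b - a := sub_le_sub (add_le_add hqz hdb) has
      _ = -(z + a - b) := by rw [abs_of_neg hz]; abel
      _ ≤ |z + a - b| := neg_le_abs _

theorem queue_dominated_by_imbalance_general
    (a₁ a₂ ad sd : ℕ → ℝ) (z q : ℕ → ℝ)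
    (hz : ∀ k, z (k + 1) = z k + a₁ k - a₂ k)
    (hq : ∀ k, q (k + 1) = max 0 (q k + ad k - sd k))
    (h0 : q 0 = |z 0|)
    (hpos : ∀ k, 0 ≤ z k → a₂ k ≤ sd k ∧ ad k ≤ a₁ k)
    (hneg : ∀ k, z k < 0 → a₁ k ≤ sd k ∧ ad k ≤ a₂ k) :
    ∀ k, q k ≤ |z k| := by
  intro k
  induction k with
  | zero => exact h0.le
  | succ k ih =>
    rw [hq k, hz k]
    exact max_zero_add_sub_le_abs_add_sub ih (hpos k) (hneg k)

/-- Pathwise coupling: the single-server queue is dominated by the absolute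
imbalance of the two-sided queue. -/
theorem queue_dominated_by_imbalance
    (a₁ a₂ ad sd : ℕ → ℝ) (z q : ℕ → ℝ)
    (ha₁ : ∀ k, 0 ≤ a₁ k) (ha₂ : ∀ k, 0 ≤ a₂ k)
    (had : ∀ k, 0 ≤ ad k) (hsd : ∀ k, 0 ≤ sd k)
    (hz : ∀ k, z (k + 1) = z k + a₁ k - a₂ k)
    (hq : ∀ k, q (k + 1) = max 0 (q k + ad k - sd k))
    (h0 : q 0 = |z 0|)
    (hpos : ∀ k, 0 ≤ z k → a₂ k ≤ sd k ∧ ad k ≤ a₁ k)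
    (hneg : ∀ k, z k < 0 → a₁ k ≤ sd k ∧ ad k ≤ a₂ k) :
    ∀ k, q k ≤ |z k| :=
  queue_dominated_by_imbalance_general a₁ a₂ ad sd z q hz hq h0 hpos hneg
end
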